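/- Assume X, W, A, S all have nonnegative entries. Fix indices i, j with 1 ≤ i ≤ n, 1 ≤ j ≤ q, and assume W_{ij} > 0 and (W·A·S·Sᵀ·Aᵀ)_{ij} > 0. Let w* = W_{ij} · (X·Sᵀ·Aᵀ)_{ij} / (W·A·S·Sᵀ·Aᵀ)_{ij} and let W* be the matrix that agrees with W except that its (i,j) entry is replaced by w*. Then the objective does not increase under this multiplicative update: D(W*, A, S) ≤ D(W, A, S). -/

import Mathlib

open Matrix

/-- The GBR-NMF objective `D(W,A,S) = ‖X − W·A·S‖_F² = Tr((X − WAS)(X − WAS)ᵀ)`. -/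
noncomputable def objD {n p q : ℕ} (X : Matrix (Fin n) (Fin p) ℝ)
    (W : Matrix (Fin n) (Fin q) ℝ) (A : Matrix (Fin q) (Fin q) ℝ)
    (S : Matrix (Fin q) (Fin p) ℝ) : ℝ :=
  Matrix.trace ((X - W * A * S) * (X - W * A * S)ᵀ)

/-- The matrix agreeing with `M` except that its `(i,j)` entry is replaced by `w`. -/
def updEntry {m k : ℕ} (M : Matrix (Fin m) (Fin k) ℝ) (i : Fin m) (j : Fin k) (w : ℝ) :
    Matrix (Fin m) (Fin k) ℝ :=
  fun a b => if a = i ∧ b = j then w else M a b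

/-! As a function of the single entry `W i j`, the objective is the quadratic
`D(W i j + δ) = D - 2 δ g + δ² a` with `g = ((X - W A S)(A S)ᵀ) i j` and
`a = ((A S)(A S)ᵀ) j j`. The update is the step `δ = W i j · g / d` with
`d = (W (A S)(A S)ᵀ) i j`, and nonnegativity of `W, A, S` gives `W i j · a ≤ d`, hence
`δ² a = δ g · (W i j · a / d) ≤ δ g ≤ 2 δ g` since `δ g ≥ 0`.
-/

namespace Matrix

variable {l m n α : Type*} [Fintype m]

theorem mul_apply_nonneg [Semiring α] [PartialOrder α] [IsOrderedRing α]
    {M : Matrix l m α} {N : Matrix m n α} (hM : ∀ a b, 0 ≤ M a b) (hN : ∀ a b, 0 ≤ N a b)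
    (a : l) (b : n) : 0 ≤ (M * N) a b :=
  Finset.sum_nonneg fun c _ => mul_nonneg (hM a c) (hN c b)

theorem apply_mul_apply_le_mul_apply [Semiring α] [PartialOrder α] [IsOrderedRing α]
    {M : Matrix l m α} {N : Matrix m n α} (hM : ∀ a b, 0 ≤ M a b) (hN : ∀ a b, 0 ≤ N a b)
    (a : l) (c : m) (b : n) : M a c * N c b ≤ (M * N) a b :=
  Finset.single_le_sum (f := fun c => M a c * N c b) (fun c _ => mul_nonneg (hM a c) (hN c b))
    (Finset.mem_univ c)

variable [Fintype l] [Fintype n] [DecidableEq l] [DecidableEq m] [CommRing α]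

theorem trace_sub_single_mul_mul_transpose (R : Matrix l n α) (B : Matrix m n α) (i : l) (j : m)
    (δ : α) :
    trace ((R - single i j δ * B) * (R - single i j δ * B)ᵀ)
      = trace (R * Rᵀ) - 2 * δ * (R * Bᵀ) i j + δ ^ 2 * (B * Bᵀ) j j := by
  have hcross : trace (R * (single i j δ * B)ᵀ) = δ * (R * Bᵀ) i j := by
    rw [transpose_mul, transpose_single, ← Matrix.mul_assoc, trace_mul_single]
    simp [mul_comm]
  have hcross' : trace (single i j δ * B * Rᵀ) = δ * (R * Bᵀ) i j := by
    rw [← hcross, ← trace_transpose]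
    simp [transpose_mul]
  have hsq : trace (single i j δ * B * (single i j δ * B)ᵀ) = δ ^ 2 * (B * Bᵀ) j j := by
    rw [transpose_mul, transpose_single, ← Matrix.mul_assoc, Matrix.mul_assoc (single i j δ) B,
      single_mul_mul_single, trace_single_eq_same]
    ring
  rw [transpose_sub, Matrix.sub_mul, Matrix.mul_sub, Matrix.mul_sub]
  simp only [trace_sub, hcross, hcross', hsq]
  ring

end Matrix

theorem updEntry_eq_add_single {m k : ℕ} (M : Matrix (Fin m) (Fin k) ℝ) (i : Fin m) (j : Fin k)
    (w : ℝ) : updEntry M i j w = M + single i j (w - M i j) := by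
  ext a b
  by_cases h : a = i ∧ b = j
  · obtain ⟨rfl, rfl⟩ := h
    simp [updEntry]
  · rw [updEntry, if_neg h, Matrix.add_apply, single_apply,
      if_neg fun h' => h ⟨h'.1.symm, h'.2.symm⟩, add_zero]

theorem objD_updEntry {n p q : ℕ} (X : Matrix (Fin n) (Fin p) ℝ)
    (W : Matrix (Fin n) (Fin q) ℝ) (A : Matrix (Fin q) (Fin q) ℝ)
    (S : Matrix (Fin q) (Fin p) ℝ) (i : Fin n) (j : Fin q) (w : ℝ) :
    objD X (updEntry W i j w) A S = objD X W A S
      - 2 * (w - W i j) * ((X - W * A * S) * (A * S)ᵀ) i j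
      + (w - W i j) ^ 2 * ((A * S) * (A * S)ᵀ) j j := by
  have hres :
      X - updEntry W i j w * A * S = X - W * A * S - single i j (w - W i j) * (A * S) := by
    rw [updEntry_eq_add_single, Matrix.mul_assoc, Matrix.add_mul, Matrix.mul_assoc,
      sub_add_eq_sub_sub]
  rw [objD, objD, hres, trace_sub_single_mul_mul_transpose]

theorem mul_div_sq_mul_le_two_mul {w a d : ℝ} (hw : 0 ≤ w) (hd : 0 < d) (hwa : w * a ≤ d)
    (g : ℝ) :
    (w * g / d) ^ 2 * a ≤ 2 * (w * g / d) * g := by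
  have hstep : 0 ≤ w * g / d * g := by
    rw [div_mul_eq_mul_div, mul_assoc]
    exact div_nonneg (mul_nonneg hw (mul_self_nonneg g)) hd.le
  calc (w * g / d) ^ 2 * a = w * g / d * g * (w * a / d) := by ring
    _ ≤ w * g / d * g * 1 := mul_le_mul_of_nonneg_left ((div_le_one hd).2 hwa) hstep
    _ ≤ 2 * (w * g / d) * g := by linarith

theorem objective_nonincreasing_W_update_general
    (n p q : ℕ)
    (X : Matrix (Fin n) (Fin p) ℝ) (W : Matrix (Fin n) (Fin q) ℝ)
    (A : Matrix (Fin q) (Fin q) ℝ) (S : Matrix (Fin q) (Fin p) ℝ)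
    (hW : ∀ i j, 0 ≤ W i j)
    (hA : ∀ i j, 0 ≤ A i j) (hS : ∀ i j, 0 ≤ S i j)
    (i : Fin n) (j : Fin q)
    (hpos : 0 < W i j) (hden : 0 < (W * A * S * Sᵀ * Aᵀ) i j) :
    objD X (updEntry W i j (W i j * (X * Sᵀ * Aᵀ) i j / (W * A * S * Sᵀ * Aᵀ) i j)) A S
      ≤ objD X W A S := by
  set B := A * S
  have hB : ∀ a b, 0 ≤ B a b := mul_apply_nonneg hA hS
  have hd : W * A * S * Sᵀ * Aᵀ = W * (B * Bᵀ) := by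
    simp only [B, transpose_mul, Matrix.mul_assoc]
  have hg : X * Sᵀ * Aᵀ - W * A * S * Sᵀ * Aᵀ = (X - W * A * S) * Bᵀ := by
    simp only [B, transpose_mul, Matrix.sub_mul, Matrix.mul_assoc]
  have hwa : W i j * (B * Bᵀ) j j ≤ (W * (B * Bᵀ)) i j :=
    apply_mul_apply_le_mul_apply hW (mul_apply_nonneg hB fun a b => hB b a) i j j
  rw [hd] at hden ⊢
  have hstep : W i j * (X * Sᵀ * Aᵀ) i j / (W * (B * Bᵀ)) i j - W i j
      = W i j * ((X - W * A * S) * Bᵀ) i j / (W * (B * Bᵀ)) i j := by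
    rw [← hg, Matrix.sub_apply, hd]
    field_simp
  rw [objD_updEntry, hstep]
  linarith [mul_div_sq_mul_le_two_mul hpos.le hden hwa (((X - W * A * S) * Bᵀ) i j)]

/-- The multiplicative update of the `(i,j)` entry of `W`,
`w* = W_{ij} · (X·Sᵀ·Aᵀ)_{ij} / (W·A·S·Sᵀ·Aᵀ)_{ij}`, does not increase the objective. -/
theorem objective_nonincreasing_W_update
    (n p q : ℕ)
    (X : Matrix (Fin n) (Fin p) ℝ) (W : Matrix (Fin n) (Fin q) ℝ)
    (A : Matrix (Fin q) (Fin q) ℝ) (S : Matrix (Fin q) (Fin p) ℝ)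
    (hX : ∀ i j, 0 ≤ X i j) (hW : ∀ i j, 0 ≤ W i j)
    (hA : ∀ i j, 0 ≤ A i j) (hS : ∀ i j, 0 ≤ S i j)
    (i : Fin n) (j : Fin q)
    (hpos : 0 < W i j) (hden : 0 < (W * A * S * Sᵀ * Aᵀ) i j) :
    objD X (updEntry W i j (W i j * (X * Sᵀ * Aᵀ) i j / (W * A * S * Sᵀ * Aᵀ) i j)) A S
      ≤ objD X W A S :=
  objective_nonincreasing_W_update_general n p q X W A S hW hA hS i j hpos hden
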